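/- arXiv:1011.5971 — 2 statements merged into one kernel-verified Lean document; each statement's English description precedes it below -/
import Mathlib

section
/- Let (u_n) be the sequence of palindromic prefixes of a standard episturmian word with directive word x_1 x_2 ⋯, defined by u_1 = ε and u_{n+1} = (u_n x_n)^(+). Let μ_0 = Id, μ_n = ψ_{x_1} ∘ ⋯ ∘ ψ_{x_n}, and h_n = μ_n(x_{n+1}). Then u_{n+1} = h_{n-1} u_n for all n ≥ 1. -/
variable {A : Type*} [DecidableEq A]

/-- `psiW a` is the morphism with `ψ_a(a) = a` and `ψ_a(x) = ax` for `x ≠ a`. -/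
def psiW (a : A) (w : List A) : List A :=
  w.flatMap (fun b => if b = a then [a] else [a, b])

/-- `muW x n = ψ_{x 1} ∘ ⋯ ∘ ψ_{x n}`. -/
def muW (x : ℕ → A) : ℕ → List A → List A
  | 0 => id
  | n + 1 => fun w => muW x n (psiW (x (n + 1)) w)

/-- `hW x n = μ_n (x_{n+1})`. -/
def hW (x : ℕ → A) (n : ℕ) : List A := muW x n [x (n + 1)]

/-- `p` is the palindromic right-closure of `w`: the shortest palindrome having `w`
as a prefix. -/
def IsPalClosure (w p : List A) : Prop :=
  w <+: p ∧ p.reverse = p ∧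
    ∀ q : List A, w <+: q → q.reverse = q → p.length ≤ q.length

/-- The finite word `w` is a prefix of the infinite word `s`. -/
def PrefInf (w : List A) (s : ℕ → A) : Prop :=
  ∀ i : ℕ, ∀ h : i < w.length, w[i] = s i

/-- Number of occurrences (positions) of `w` as a factor of `v`. -/
def occ (w v : List A) : ℕ :=
  (List.range (v.length + 1)).countP
    (fun i => decide (i + w.length ≤ v.length ∧ (v.drop i).take w.length = w))

/-- `cat z k = z 1 ++ z 2 ++ ⋯ ++ z k`. -/
def cat (z : ℕ → List A) (k : ℕ) : List A := ((List.range' 1 k).map z).flatten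

/-- `z` is the Ziv-Lempel factorization of the infinite word `s`: each `z m` is
the shortest prefix of `z m · z (m+1) ⋯` occurring only once in `z 1 ⋯ z m`. -/
def IsZFact (s : ℕ → A) (z : ℕ → List A) : Prop :=
  ∀ m : ℕ, 1 ≤ m → z m ≠ [] ∧ PrefInf (cat z m) s ∧
    occ (z m) (cat z m) = 1 ∧
    ∀ p : List A, p <+: z m → p ≠ z m → 2 ≤ occ p (cat z m)

/-- `c` is the Crochemore factorization of the infinite word `s`: each `c m` is
either a fresh letter, or the longest prefix of `c m · c (m+1) ⋯` occurring
twice in `c 1 ⋯ c m`. -/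
def IsCFact (s : ℕ → A) (c : ℕ → List A) : Prop :=
  ∀ m : ℕ, 1 ≤ m → c m ≠ [] ∧ PrefInf (cat c m) s ∧
    ((∃ a : A, c m = [a] ∧ a ∉ cat c (m - 1)) ∨
      (2 ≤ occ (c m) (cat c m) ∧
        occ (c m ++ [s (cat c m).length]) (cat c m ++ [s (cat c m).length]) = 1))

/-! If `q` is the longest palindromic suffix of `w = v q`, the palindromic closure of `w` is
`w ṽ`. The nonempty palindromic suffixes of `ψ_a(w) a` are exactly the words `ψ_a(s) a` with `s` a
palindromic suffix of `w`, which gives Justin's lemma `(ψ_a(w) a)⁽⁺⁾ = ψ_a(w⁽⁺⁾) a`. When `w`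
ends with a letter `c ≠ a`, the longest palindromic suffix of `ψ_a(w)` starts with `c`, which in
the image of `ψ_a` is preceded by `a`; so the closure of `ψ_a(w)` continues with `a` and equals
that of `ψ_a(w) a`. Hence the palindromic prefixes for `x₁ x₂ ⋯` are `ψ_{x₁}(v) x₁` for those `v`
of `x₂ x₃ ⋯`, and the formula follows by induction on `n`, shifting the directive word. -/

open List

section PalClosure

variable {α : Type*}

theorem reverse_eq_take_of_palindrome_append {w s : List α} (h : (w ++ s).reverse = w ++ s)
    (hs : s.length ≤ w.length) : s.reverse = w.take s.length := by
  have := congrArg (take s.length) h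
  rwa [reverse_append, take_left' (length_reverse), take_append_of_le_length hs] at this

theorem palindrome_drop_of_prefix_palindrome {w r : List α} (hr : r.reverse = r) (hwr : w <+: r)
    (hlen : r.length ≤ 2 * w.length) :
    (w.drop (r.length - w.length)).reverse = w.drop (r.length - w.length) := by
  obtain ⟨t, rfl⟩ := hwr
  have ht : t.length ≤ w.length := by simp at hlen; omega
  have hw : w = t.reverse ++ w.drop t.length := by
    rw [reverse_eq_take_of_palindrome_append hr ht, take_append_drop]
  rw [length_append, Nat.add_sub_cancel_left]
  rw [hw] at hr
  simpa using hr

def IsLongestPalSuffix (q w : List α) : Prop :=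
  q <:+ w ∧ q.reverse = q ∧ ∀ q' : List α, q' <:+ w → q'.reverse = q' → q'.length ≤ q.length

theorem exists_isLongestPalSuffix (w : List α) : ∃ q, IsLongestPalSuffix q w := by
  classical
  have hex : ∃ k, (w.drop k).reverse = w.drop k := ⟨w.length, by simp⟩
  refine ⟨w.drop (Nat.find hex), drop_suffix _ _, Nat.find_spec hex, fun q hq hpal => ?_⟩
  have hk := Nat.find_min' hex (suffix_iff_eq_drop.mp hq ▸ hpal)
  have := hq.length_le
  simp only [length_drop]
  omega

theorem isPalClosure_append_reverse {v q : List α} (h : IsLongestPalSuffix q (v ++ q)) :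
    IsPalClosure (v ++ q) (v ++ q ++ v.reverse) := by
  refine ⟨prefix_append _ _, by simp [h.2.1], fun r hwr hr => ?_⟩
  by_contra! hlt
  have hlen : r.length ≤ 2 * (v ++ q).length := by simp at hlt ⊢; omega
  have := h.2.2 _ (drop_suffix _ _) (palindrome_drop_of_prefix_palindrome hr hwr hlen)
  have hwr := hwr.length_le
  simp only [length_append, length_reverse, length_drop] at hlt hlen hwr this
  omega

theorem isPalClosure_nil : IsPalClosure ([] : List α) [] :=
  ⟨prefix_refl _, rfl, fun _ _ _ => Nat.zero_le _⟩

theorem exists_isPalClosure (w : List α) : ∃ p, IsPalClosure w p := by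
  obtain ⟨q, hq⟩ := exists_isLongestPalSuffix w
  obtain ⟨v, rfl⟩ := hq.1
  exact ⟨_, isPalClosure_append_reverse hq⟩

theorem IsPalClosure.eq {w p p' : List α} (hp : IsPalClosure w p) (hp' : IsPalClosure w p') :
    p = p' := by
  have hlen : p.length = p'.length := le_antisymm (hp.2.2 p' hp'.1 hp'.2.1) (hp'.2.2 p hp.1 hp.2.1)
  have hbound : p.length ≤ (w ++ w.reverse).length := hp.2.2 _ (prefix_append _ _) (by simp)
  obtain ⟨s, rfl⟩ := hp.1
  obtain ⟨s', rfl⟩ := hp'.1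
  have hs : s.length = s'.length := by simpa using hlen
  have hsw : s.length ≤ w.length := by simpa using hbound
  rw [← reverse_reverse s, ← reverse_reverse s', reverse_eq_take_of_palindrome_append hp.2.1 hsw,
    reverse_eq_take_of_palindrome_append hp'.2.1 (hs ▸ hsw), hs]

theorem IsPalClosure.of_prefix {w w' p : List α} (hp : IsPalClosure w p) (hww' : w <+: w')
    (hw'p : w' <+: p) : IsPalClosure w' p :=
  ⟨hw'p, hp.2.1, fun q hq hqr => hp.2.2 q (hww'.trans hq) hqr⟩

noncomputable def palClosure (w : List α) : List α := (exists_isPalClosure w).choose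

theorem isPalClosure_palClosure (w : List α) : IsPalClosure w (palClosure w) :=
  (exists_isPalClosure w).choose_spec

end PalClosure

theorem psiW_nil (a : A) : psiW a [] = [] := rfl

@[simp]
theorem psiW_append (a : A) (u v : List A) : psiW a (u ++ v) = psiW a u ++ psiW a v :=
  flatMap_append ..

theorem psiW_cons (a b : A) (u : List A) :
    psiW a (b :: u) = (if b = a then [a] else [a, b]) ++ psiW a u :=
  flatMap_cons ..

theorem eq_of_psiW_eq_cons {a c : A} {u s : List A} (h : psiW a u = c :: s) : c = a := by
  cases u with
  | nil => cases h
  | cons b u => rw [psiW_cons] at h; split_ifs at h <;> simp_all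

theorem reverse_psiW_append (a : A) (u : List A) :
    (psiW a u ++ [a]).reverse = psiW a u.reverse ++ [a] := by
  induction u with
  | nil => rfl
  | cons b u ih =>
    rw [reverse_cons, psiW_append, psiW_cons, append_assoc, reverse_append, ih]
    split_ifs <;> simp_all [psiW]

theorem psiW_injective (a : A) : Function.Injective (psiW a) := by
  intro u
  induction u with
  | nil =>
    intro v h
    cases v with
    | nil => rfl
    | cons c v => rw [psiW_nil, psiW_cons] at h; split_ifs at h <;> simp at h
  | cons b u ih =>
    intro v h
    cases v with
    | nil => rw [psiW_nil, psiW_cons] at h; split_ifs at h <;> simp at h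
    | cons c v =>
      rw [psiW_cons, psiW_cons] at h
      split_ifs at h with hb hc hc
      · simp only [singleton_append, cons.injEq, true_and] at h
        rw [hb, hc, ih h]
      · simp only [cons_append, nil_append, cons.injEq, true_and] at h
        exact absurd (eq_of_psiW_eq_cons h) hc
      · simp only [cons_append, nil_append, cons.injEq, true_and] at h
        exact absurd (eq_of_psiW_eq_cons h.symm) hb
      · simp only [cons_append, nil_append, cons.injEq, true_and] at h
        rw [h.1, ih h.2]

theorem exists_of_psiW_eq_append {a : A} {u v t : List A} (h : psiW a u = v ++ t) :
    (∃ u₁ u₂, u = u₁ ++ u₂ ∧ v = psiW a u₁ ∧ t = psiW a u₂) ∨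
      ∃ u₁ c u₂, c ≠ a ∧ u = u₁ ++ c :: u₂ ∧ v = psiW a u₁ ++ [a] ∧ t = c :: psiW a u₂ := by
  induction u generalizing v with
  | nil =>
    obtain ⟨rfl, rfl⟩ := append_eq_nil_iff.mp h.symm
    exact Or.inl ⟨[], [], rfl, rfl, rfl⟩
  | cons b u ih =>
    rw [psiW_cons, append_eq_append_iff] at h
    rcases h with ⟨v', rfl, h⟩ | ⟨bs, hblk, rfl⟩
    · rcases ih h with ⟨u₁, u₂, rfl, rfl, rfl⟩ | ⟨u₁, c, u₂, hc, rfl, rfl, rfl⟩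
      · exact Or.inl ⟨b :: u₁, u₂, rfl, by rw [psiW_cons], rfl⟩
      · exact Or.inr ⟨b :: u₁, c, u₂, hc, rfl, by rw [psiW_cons, append_assoc], rfl⟩
    · split_ifs at hblk with hb
      · rcases v with _ | ⟨_, _ | _⟩ <;> simp at hblk
        · exact Or.inl ⟨[], b :: u, rfl, rfl, by rw [psiW_cons, if_pos hb, hblk]⟩
        · obtain ⟨rfl, rfl⟩ := hblk
          exact Or.inl ⟨[b], u, rfl, by simp [psiW, hb], rfl⟩
      · rcases v with _ | ⟨_, _ | ⟨_, _ | _⟩⟩ <;> simp at hblk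
        · exact Or.inl ⟨[], b :: u, rfl, rfl, by rw [psiW_cons, if_neg hb, hblk]⟩
        · obtain ⟨rfl, rfl⟩ := hblk
          exact Or.inr ⟨[], b, u, hb, rfl, rfl, rfl⟩
        · obtain ⟨rfl, rfl, rfl⟩ := hblk
          exact Or.inl ⟨[b], u, rfl, by simp [psiW, hb], rfl⟩

theorem IsLongestPalSuffix.psiW_append {q w : List A} (h : IsLongestPalSuffix q w) (a : A) :
    IsLongestPalSuffix (psiW a q ++ [a]) (psiW a w ++ [a]) := by
  obtain ⟨hqw, hq, hmax⟩ := h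
  refine ⟨suffix_concat_iff.mpr (Or.inr ⟨_, rfl, hqw.flatMap _⟩),
    by rw [reverse_psiW_append, hq], fun t ht htr => ?_⟩
  rcases suffix_concat_iff.mp ht with rfl | ⟨t', rfl, v, hv⟩
  · simp
  rcases exists_of_psiW_eq_append hv.symm with ⟨u, s, rfl, -, rfl⟩ | ⟨-, c, s, hc, -, -, rfl⟩
  · have hs : s.reverse = s :=
      psiW_injective a (append_cancel_right (by rw [← reverse_psiW_append, htr]))
    have hsq : s <:+ q := suffix_of_suffix_length_le (suffix_append _ _) hqw
      (hmax s (suffix_append _ _) hs)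
    simpa using (show psiW a s <:+ psiW a q from hsq.flatMap _).length_le
  · have := congrArg head? htr
    simp at this
    exact absurd this.symm hc

theorem IsPalClosure.psiW_append {w p : List A} (hp : IsPalClosure w p) (a : A) :
    IsPalClosure (psiW a w ++ [a]) (psiW a p ++ [a]) := by
  obtain ⟨q, hq⟩ := exists_isLongestPalSuffix w
  obtain ⟨v, rfl⟩ := hq.1
  have hpal := isPalClosure_append_reverse (v := psiW a v) (q := psiW a q ++ [a])
    (by simpa using hq.psiW_append a)
  have hv : a :: (psiW a v).reverse = psiW a v.reverse ++ [a] := by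
    simpa using reverse_psiW_append a v
  rw [hp.eq (isPalClosure_append_reverse hq)]
  convert hpal using 1 <;> simp [← hv]

theorem IsPalClosure.psiW_append_pair {w p : List A} {c : A} (hp : IsPalClosure (w ++ [c]) p)
    (a : A) : IsPalClosure (psiW a w ++ [a, c]) (psiW a p ++ [a]) := by
  by_cases hc : c = a
  · subst hc
    simpa [psiW] using hp.psiW_append c
  have hW : psiW a w ++ [a] ++ [c] = psiW a (w ++ [c]) := by simp [psiW, hc]
  obtain ⟨q, hq⟩ := exists_isLongestPalSuffix (psiW a w ++ [a] ++ [c])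
  obtain ⟨q', rfl⟩ : ∃ q', q = c :: q' := by
    have h1 := hq.2.2 [c] (suffix_append _ _) rfl
    rcases suffix_concat_iff.mp hq.1 with rfl | ⟨q₀, rfl, -⟩
    · simp at h1
    · exact ⟨q₀.reverse, by simpa using hq.2.1.symm⟩
  obtain ⟨v, hv⟩ := hq.1
  obtain ⟨v', rfl⟩ : ∃ v', v = psiW a v' ++ [a] := by
    rcases exists_of_psiW_eq_append (hv.trans hW).symm with
      ⟨-, u₂, -, -, h⟩ | ⟨u₁, -, -, -, -, rfl, -⟩
    · exact absurd (eq_of_psiW_eq_cons h.symm) hc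
    · exact ⟨u₁, rfl⟩
  rw [← hv] at hq
  have hcl := isPalClosure_append_reverse hq
  rw [hv] at hcl
  have hJ := hp.psiW_append a
  rw [← hW] at hJ
  rw [hJ.eq (hcl.of_prefix (prefix_append _ _) (by simp))]
  simpa using hcl

theorem muW_succ_eq_psiW (x : ℕ → A) (m : ℕ) (w : List A) :
    muW x (m + 1) w = psiW (x 1) (muW (fun k => x (k + 1)) m w) := by
  induction m generalizing w with
  | zero => rfl
  | succ m ih => exact ih _

theorem hW_succ_eq_psiW (x : ℕ → A) (m : ℕ) :
    hW x (m + 1) = psiW (x 1) (hW (fun k => x (k + 1)) m) :=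
  muW_succ_eq_psiW x m _

/-- `palPrefix x n` is the palindromic prefix `u_{n+1}` of the paper. -/
noncomputable def palPrefix (x : ℕ → A) : ℕ → List A
  | 0 => []
  | n + 1 => palClosure (palPrefix x n ++ [x (n + 1)])

theorem palPrefix_succ_eq_psiW (x : ℕ → A) (n : ℕ) :
    palPrefix x (n + 1) = psiW (x 1) (palPrefix (fun k => x (k + 1)) n) ++ [x 1] := by
  induction n with
  | zero => exact (isPalClosure_palClosure _).eq (isPalClosure_nil.psiW_append (x 1))
  | succ n ih =>
    refine (isPalClosure_palClosure _).eq ?_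
    rw [ih, append_assoc]
    exact (isPalClosure_palClosure _).psiW_append_pair (x 1)

theorem palPrefix_succ_eq_hW_append (x : ℕ → A) (n : ℕ) :
    palPrefix x (n + 1) = hW x n ++ palPrefix x n := by
  induction n generalizing x with
  | zero => rw [palPrefix_succ_eq_psiW]; rfl
  | succ n ih =>
    rw [palPrefix_succ_eq_psiW, ih, psiW_append, ← hW_succ_eq_psiW, palPrefix_succ_eq_psiW x n,
      append_assoc]

theorem u_succ_eq_h_append (x : ℕ → A) (u : ℕ → List A) (hu1 : u 1 = [])
    (hu : ∀ n : ℕ, 1 ≤ n → IsPalClosure (u n ++ [x n]) (u (n + 1))) :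
    ∀ n : ℕ, 1 ≤ n → u (n + 1) = hW x (n - 1) ++ u n := by
  have hu_eq : ∀ n, u (n + 1) = palPrefix x n := by
    intro n
    induction n with
    | zero => exact hu1
    | succ n ih => exact (hu (n + 1) (by omega)).eq (ih ▸ isPalClosure_palClosure _)
  intro n hn
  obtain ⟨m, rfl⟩ := Nat.exists_eq_add_of_le' hn
  rw [hu_eq, hu_eq, Nat.add_sub_cancel, palPrefix_succ_eq_hW_append]
end

section
/- Write the directive word as x_1 x_2 ⋯ = y_1^{d_1} y_2^{d_2} ⋯ with y_i ≠ y_{i+1} and d_i > 0, and set g(m) = d_1 + ⋯ + d_{m-1} + 1. Then u_{g(m+1)} = (h_{g(m)-1})^{d_m} u_{g(m)} = u_{g(m)} (\bar{h_{g(m)-1}})^{d_m}. -/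
variable {A : Type*} [DecidableEq A]

/-!
The key fact is `u_{n+1} = μ_n(x_n) u_n` for `n ≥ 1`. It is proved by induction on `n` together
with the images of all single letters `b`: if the last occurrence of `b` in `x_1 ⋯ x_n` is at `k`
then `μ_n(b) u_k = u_{n+1}`, and if `b` does not occur then `μ_n(b) = u_{n+1} b`. From these,
`μ_n(x_{n+1}) u_{n+1}` is a palindrome with prefix `u_{n+1} x_{n+1}`; it is the shortest one,
because a shorter one would exhibit a palindromic suffix `x_{n+1} u_j x_{n+1}` of
`u_{n+1} x_{n+1}` with `u_j` longer than `u_k`, i.e. an occurrence `x_j = x_{n+1}` after `k`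
(or any occurrence at all, when `x_{n+1}` is new).

Since `ψ_a(a) = a`, `μ_n(a) = μ_{n-1}(a)` whenever `x_n = a`, so along the block `y_m^{d_m}` every
step prepends the same word `h_{g(m)-1}`. The second identity is the reversal of the first, all
`u_n` being palindromes.
-/

namespace List

variable {α : Type*}

theorem exists_reverse_eq_of_append_singleton_prefix {v q : List α} {a : α}
    (hv : v.reverse = v) (hq : q.reverse = q) (hpre : v ++ [a] <+: q)
    (hlen : q.length ≤ 2 * v.length) :
    ∃ m : List α, m.reverse = m ∧ m ++ [a] <+: v ∧ m.length + q.length = 2 * v.length := by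
  obtain ⟨t, rfl⟩ := hpre
  -- comparing `v a t` with its reversal `tᴿ a v` forces `v = m a t` with `tᴿ a m = v = tᴿ a mᴿ`
  have hrev : t.reverse ++ a :: v = v ++ a :: t := by simpa [hv] using hq
  have ht : t.length < v.length := by simp only [length_append, length_cons, length_nil] at hlen; omega
  rcases append_eq_append_iff.1 hrev with ⟨r, hvr, hr⟩ | ⟨c, htc, -⟩
  · cases r with
    | nil => simp only [nil_append, cons.injEq, true_and] at hr; simp [hr] at ht
    | cons c m =>
      obtain ⟨rfl, hvm⟩ : a = c ∧ v = m ++ a :: t := by simpa using hr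
      refine ⟨m, ?_, ⟨t, by simp [hvm]⟩, by simp [hvm]; omega⟩
      have : t.reverse ++ a :: m.reverse = t.reverse ++ a :: m := by
        rw [← hvr, ← hv, hvm]; simp
      simpa using this
  · have := congrArg length htc
    simp only [length_reverse, length_append] at this; omega

theorem flatten_replicate_append_of_forall_succ {u : ℕ → List α} {h : List α} {a k : ℕ}
    (hstep : ∀ i < k, u (a + i + 1) = h ++ u (a + i)) :
    u (a + k) = (replicate k h).flatten ++ u a := by
  induction k with
  | zero => simp
  | succ k ih =>
    rw [← Nat.add_assoc, hstep k (by omega), ih fun i hi => hstep i (by omega),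
      replicate_succ, flatten_cons, append_assoc]

end List

open List

section PalClosure

variable {α : Type*} {w p q : List α}

theorem IsPalClosure.length_le (hp : IsPalClosure w p) : p.length ≤ 2 * w.length := by
  simpa [two_mul] using hp.2.2 (w ++ w.reverse) (prefix_append _ _) (by simp)

theorem IsPalClosure.reverse_prefix_of_append {s : List α} (hp : IsPalClosure w (w ++ s)) :
    s.reverse <+: w := by
  have hs : s.reverse <+: w ++ s := ⟨w.reverse, by rw [← reverse_append, hp.2.1]⟩
  refine prefix_of_prefix_length_le hs (prefix_append w s) ?_
  have := hp.length_le
  simp only [length_append, length_reverse] at this ⊢; omega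

theorem IsPalClosure.eq_s13 (hp : IsPalClosure w p) (hq : IsPalClosure w q) : p = q := by
  obtain ⟨s, rfl⟩ := hp.1
  obtain ⟨s', rfl⟩ := hq.1
  have hlen : s.reverse.length = s'.reverse.length := by
    have := le_antisymm (hp.2.2 _ hq.1 hq.2.1) (hq.2.2 _ hp.1 hp.2.1)
    simpa using this
  have := prefix_of_prefix_length_le hp.reverse_prefix_of_append
    hq.reverse_prefix_of_append hlen.le
  rw [reverse_inj.1 (this.eq_of_length hlen)]

end PalClosure

theorem psiW_singleton (a b : A) : psiW a [b] = if b = a then [a] else [a, b] := by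
  simp [psiW]

theorem muW_append (x : ℕ → A) (n : ℕ) (v w : List A) :
    muW x n (v ++ w) = muW x n v ++ muW x n w := by
  induction n generalizing v w with
  | zero => rfl
  | succ n ih => exact (congrArg (muW x n) List.flatMap_append).trans (ih _ _)

theorem muW_succ_singleton_self (x : ℕ → A) (n : ℕ) :
    muW x (n + 1) [x (n + 1)] = muW x n [x (n + 1)] := by
  simp [muW, psiW_singleton]

theorem muW_succ_singleton_of_ne (x : ℕ → A) (n : ℕ) {b : A} (hb : x (n + 1) ≠ b) :
    muW x (n + 1) [b] = muW x n [x (n + 1)] ++ muW x n [b] := by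
  change muW x n (psiW _ _) = _
  rw [psiW_singleton, if_neg (Ne.symm hb), ← muW_append, singleton_append]

theorem muW_singleton_eq_of_forall_eq {x : ℕ → A} {a : A} {j n : ℕ} (hjn : j ≤ n)
    (hx : ∀ i, j < i → i ≤ n → x i = a) : muW x n [a] = muW x j [a] := by
  induction n, hjn using Nat.le_induction with
  | base => rfl
  | succ n hjn ih =>
    rw [← hx (n + 1) (by omega) le_rfl, muW_succ_singleton_self, hx (n + 1) (by omega) le_rfl]
    exact ih fun i hi hin => hx i hi (by omega)

structure IsPalClosureSeq {α : Type*} (x : ℕ → α) (u : ℕ → List α) : Prop where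
  one : u 1 = []
  succ : ∀ n, 1 ≤ n → IsPalClosure (u n ++ [x n]) (u (n + 1))

namespace IsPalClosureSeq

variable {α : Type*} {x : ℕ → α} {u : ℕ → List α}

theorem prefix_of_le (hu : IsPalClosureSeq x u) {m n : ℕ} (hm : 1 ≤ m) (hmn : m ≤ n) :
    u m <+: u n := by
  induction n, hmn using Nat.le_induction with
  | base => exact prefix_refl _
  | succ n hmn ih => exact ih.trans ((prefix_append _ _).trans (hu.succ n (by omega)).1)

theorem append_prefix (hu : IsPalClosureSeq x u) {j n : ℕ} (hj : 1 ≤ j) (hjn : j ≤ n) :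
    u j ++ [x j] <+: u (n + 1) :=
  (hu.succ j hj).1.trans (hu.prefix_of_le (by omega) (by omega))

theorem reverse_eq (hu : IsPalClosureSeq x u) {n : ℕ} (hn : 1 ≤ n) : (u n).reverse = u n := by
  obtain _ | _ | n := n
  · omega
  · simp [hu.one]
  · exact (hu.succ (n + 1) (by omega)).2.1

theorem exists_eq_of_prefix (hu : IsPalClosureSeq x u) {n : ℕ} (hn : 1 ≤ n) {p : List α}
    (hp : p <+: u n) (hpal : p.reverse = p) : ∃ j, 1 ≤ j ∧ j ≤ n ∧ p = u j := by
  induction n, hn using Nat.le_induction with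
  | base =>
    rw [hu.one] at hp
    exact ⟨1, le_rfl, le_rfl, hu.one ▸ prefix_nil.1 hp⟩
  | succ n hn ih =>
    rcases le_or_gt p.length (u n).length with h | h
    · obtain ⟨j, hj, hjn, rfl⟩ :=
        ih (prefix_of_prefix_length_le hp (hu.prefix_of_le hn (by omega)) h)
      exact ⟨j, hj, by omega, rfl⟩
    · have hw : u n ++ [x n] <+: p :=
        prefix_of_prefix_length_le (hu.succ n hn).1 hp (by simp only [length_append, length_cons, length_nil]; omega)
      exact ⟨n + 1, by omega, le_rfl,
        hp.eq_of_length (le_antisymm hp.length_le ((hu.succ n hn).2.2 p hw hpal))⟩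

theorem exists_occurrence_of_short_palindrome (hu : IsPalClosureSeq x u) {n : ℕ} {q : List α}
    (hpre : u (n + 1) ++ [x (n + 1)] <+: q) (hq : q.reverse = q)
    (hlen : q.length ≤ 2 * (u (n + 1)).length) :
    ∃ j, 1 ≤ j ∧ j ≤ n ∧ x j = x (n + 1) ∧ (u j).length + q.length = 2 * (u (n + 1)).length := by
  obtain ⟨m, hm, hmpre, hmlen⟩ :=
    exists_reverse_eq_of_append_singleton_prefix (hu.reverse_eq (by omega)) hq hpre hlen
  obtain ⟨j, hj, hjn, rfl⟩ := hu.exists_eq_of_prefix (by omega) ((prefix_append _ _).trans hmpre) hm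
  have hjn : j ≤ n := by
    rcases hjn.lt_or_eq with h | rfl
    · omega
    · simpa using hmpre.length_le
  have : u j ++ [x j] = u j ++ [x (n + 1)] :=
    (prefix_of_prefix_length_le (hu.append_prefix hj hjn) hmpre (by simp)).eq_of_length (by simp)
  exact ⟨j, hj, hjn, by simpa using this, hmlen⟩

theorem isPalClosure_of_last_occurrence (hu : IsPalClosureSeq x u) {n k : ℕ} {h : List α}
    (hk : 1 ≤ k) (hkn : k ≤ n) (hxk : x k = x (n + 1))
    (hlast : ∀ i, k < i → i ≤ n → x i ≠ x (n + 1)) (hh : h ++ u k = u (n + 1)) :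
    IsPalClosure (u (n + 1) ++ [x (n + 1)]) (h ++ u (n + 1)) := by
  have hrev : u k ++ h.reverse = u (n + 1) := by
    simpa [hu.reverse_eq hk, hu.reverse_eq (n := n + 1) (by omega)] using congrArg reverse hh
  refine ⟨?_, ?_, fun q hq hqpal => ?_⟩
  · have := (prefix_append_right_inj h).2 (hxk ▸ hu.append_prefix hk hkn)
    rwa [← append_assoc, hh] at this
  · calc (h ++ u (n + 1)).reverse = u (n + 1) ++ h.reverse := by
          rw [reverse_append, hu.reverse_eq (by omega)]
      _ = h ++ (u k ++ h.reverse) := by rw [← hh, append_assoc]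
      _ = h ++ u (n + 1) := by rw [hrev]
  · by_contra! hlt
    have hlen := congrArg length hh
    simp only [length_append] at hlen hlt
    obtain ⟨j, hj, hjn, hxj, hjlen⟩ := hu.exists_occurrence_of_short_palindrome hq hqpal (by omega)
    have hjk : j ≤ k := by
      by_contra! hkj
      exact hlast j hkj hjn hxj
    have := (hu.prefix_of_le hj hjk).length_le
    omega

theorem isPalClosure_of_fresh (hu : IsPalClosureSeq x u) {n : ℕ}
    (hfresh : ∀ i, 1 ≤ i → i ≤ n → x i ≠ x (n + 1)) :
    IsPalClosure (u (n + 1) ++ [x (n + 1)]) (u (n + 1) ++ [x (n + 1)] ++ u (n + 1)) := by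
  refine ⟨prefix_append _ _, by simp [hu.reverse_eq], fun q hq hqpal => ?_⟩
  by_contra! hlt
  obtain ⟨j, hj, hjn, hxj, -⟩ :=
    hu.exists_occurrence_of_short_palindrome hq hqpal (by simp only [length_append, length_cons, length_nil] at hlt; omega)
  exact hfresh j hj hjn hxj

section Morphism

variable [DecidableEq α]

theorem succ_succ_eq (hu : IsPalClosureSeq x u) {n : ℕ}
    (hlast : ∀ k, 1 ≤ k → k ≤ n → (∀ i, k < i → i ≤ n → x i ≠ x k) →
      muW x n [x k] ++ u k = u (n + 1))
    (hfresh : ∀ b, (∀ i, 1 ≤ i → i ≤ n → x i ≠ b) → muW x n [b] = u (n + 1) ++ [b]) :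
    u (n + 2) = muW x n [x (n + 1)] ++ u (n + 1) := by
  refine (hu.succ (n + 1) (by omega)).eq_s13 ?_
  by_cases hocc : ∃ i, 1 ≤ i ∧ i ≤ n ∧ x i = x (n + 1)
  · obtain ⟨i, hi, hin, hxi⟩ := hocc
    set k := Nat.findGreatest (fun i => 1 ≤ i ∧ x i = x (n + 1)) n
    obtain ⟨hk, hxk⟩ : 1 ≤ k ∧ x k = x (n + 1) :=
      Nat.findGreatest_spec (P := fun i => 1 ≤ i ∧ x i = x (n + 1)) hin ⟨hi, hxi⟩
    have hkn : k ≤ n := Nat.findGreatest_le n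
    have hgt : ∀ i, k < i → i ≤ n → x i ≠ x (n + 1) := fun i hki hin hxi =>
      Nat.findGreatest_is_greatest hki hin ⟨by omega, hxi⟩
    refine hu.isPalClosure_of_last_occurrence hk hkn hxk hgt ?_
    rw [← hxk]
    exact hlast k hk hkn fun i hki hin => hxk ▸ hgt i hki hin
  · push Not at hocc
    rw [hfresh _ hocc]
    exact hu.isPalClosure_of_fresh hocc

theorem muW_singleton_append_eq_and_muW_singleton_eq_append (hu : IsPalClosureSeq x u) (n : ℕ) :
    (∀ k, 1 ≤ k → k ≤ n → (∀ i, k < i → i ≤ n → x i ≠ x k) →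
      muW x n [x k] ++ u k = u (n + 1)) ∧
    (∀ b, (∀ i, 1 ≤ i → i ≤ n → x i ≠ b) → muW x n [b] = u (n + 1) ++ [b]) := by
  induction n with
  | zero => exact ⟨fun k hk hk0 => by omega, fun b _ => by simp [muW, hu.one]⟩
  | succ n ih =>
    have hstep := hu.succ_succ_eq ih.1 ih.2
    refine ⟨fun k hk hkn hlast => ?_, fun b hb => ?_⟩
    · rcases hkn.lt_or_eq with hkn | rfl
      · rw [muW_succ_singleton_of_ne x n (hlast (n + 1) hkn le_rfl), append_assoc,
          ih.1 k hk (by omega) fun i hki hin => hlast i hki (by omega), hstep]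
      · rw [muW_succ_singleton_self, hstep]
    · rw [muW_succ_singleton_of_ne x n (hb (n + 1) (by omega) le_rfl),
        ih.2 b fun i hi hin => hb i hi (by omega), hstep, append_assoc]

theorem succ_eq (hu : IsPalClosureSeq x u) {n : ℕ} (hn : 1 ≤ n) :
    u (n + 1) = muW x n [x n] ++ u n :=
  ((hu.muW_singleton_append_eq_and_muW_singleton_eq_append n).1 n hn le_rfl
    fun i hni hin => by omega).symm

end Morphism

end IsPalClosureSeq

theorem u_g_succ_general (x : ℕ → A) (u : ℕ → List A) (hu1 : u 1 = [])
    (hu : ∀ n : ℕ, 1 ≤ n → IsPalClosure (u n ++ [x n]) (u (n + 1))) (y : ℕ → A) (d : ℕ → ℕ) (g : ℕ → ℕ)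
    (hg : ∀ m : ℕ, g m = (∑ i ∈ Finset.Icc 1 (m - 1), d i) + 1)
    (hx : ∀ m : ℕ, 1 ≤ m → ∀ n : ℕ, g m ≤ n → n < g (m + 1) → x n = y m) :
    ∀ m : ℕ, 1 ≤ m →
      u (g (m + 1)) = (List.replicate (d m) (hW x (g m - 1))).flatten ++ u (g m) ∧
      u (g (m + 1)) = u (g m) ++ (List.replicate (d m) (hW x (g m - 1)).reverse).flatten := by
  intro m hm
  have hseq : IsPalClosureSeq x u := ⟨hu1, hu⟩
  have hgm : 1 ≤ g m := by rw [hg]; omega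
  have hgsucc : g (m + 1) = g m + d m := by
    obtain ⟨m, rfl⟩ : ∃ m', m = m' + 1 := ⟨m - 1, by omega⟩
    rw [hg, hg, Nat.add_sub_cancel, Nat.add_sub_cancel, Finset.sum_Icc_succ_top (by omega)]
    omega
  have hprepend : u (g (m + 1)) = (replicate (d m) (hW x (g m - 1))).flatten ++ u (g m) := by
    rw [hgsucc]
    refine flatten_replicate_append_of_forall_succ fun i hi => ?_
    have hconst : ∀ n, g m - 1 < n → n ≤ g m + i → x n = y m := fun n h1 h2 =>
      hx m hm n (by omega) (by omega)
    rw [hseq.succ_eq (by omega), hW, Nat.sub_add_cancel hgm, hconst _ (by omega) le_rfl,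
      hconst _ (by omega) (by omega), muW_singleton_eq_of_forall_eq (by omega) hconst]
  refine ⟨hprepend, ?_⟩
  rw [← hseq.reverse_eq (n := g (m + 1)) (by omega), hprepend, reverse_append, hseq.reverse_eq hgm,
    reverse_flatten, map_replicate, reverse_replicate]

theorem u_g_succ (x : ℕ → A) (u : ℕ → List A) (hu1 : u 1 = [])
    (hu : ∀ n : ℕ, 1 ≤ n → IsPalClosure (u n ++ [x n]) (u (n + 1))) (y : ℕ → A) (d : ℕ → ℕ) (g : ℕ → ℕ)
    (hy : ∀ m : ℕ, 1 ≤ m → y m ≠ y (m + 1)) (hd : ∀ m : ℕ, 1 ≤ m → 0 < d m)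
    (hg : ∀ m : ℕ, g m = (∑ i ∈ Finset.Icc 1 (m - 1), d i) + 1)
    (hx : ∀ m : ℕ, 1 ≤ m → ∀ n : ℕ, g m ≤ n → n < g (m + 1) → x n = y m) :
    ∀ m : ℕ, 1 ≤ m →
      u (g (m + 1)) = (List.replicate (d m) (hW x (g m - 1))).flatten ++ u (g m) ∧
      u (g (m + 1)) = u (g m) ++ (List.replicate (d m) (hW x (g m - 1)).reverse).flatten :=
  u_g_succ_general x u hu1 hu y d g hg hx
end
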